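/- The tensor T = ∑_{g∈K} g·(e₁₁⊗e₁₁⊗e₁₁) + ∑_{g∈K} g·ι(W) − R, which computes 3×3 matrix multiplication, can be written as a sum of exactly 23 rank-one tensors: the 4 orbit elements of e₁₁⊗e₁₁⊗e₁₁ are rank-one, the 28 summands of ∑_{g∈K} g·ι(W) merge (by combining 12 pairs plus absorbing the correction term R) into 19 rank-one tensors, giving total tensor rank at most 23. -/

import Mathlib

open Matrix TensorProduct

variable {K : Type*} [Field K]

abbrev M3 (K : Type*) [Field K] := Matrix (Fin 3) (Fin 3) K

/-- The linear map `X ↦ P * X * Q` on matrices. -/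
def conjMap (P Q : M3 K) : M3 K →ₗ[K] M3 K where
  toFun X := P * X * Q
  map_add' X Y := by simp [Matrix.mul_add, Matrix.add_mul]
  map_smul' c X := by simp [Matrix.mul_smul, Matrix.smul_mul]

/-- Sandwiching by `(G₁,G₂,G₃)`, extended linearly. -/
noncomputable def sandwich (G₁ G₂ G₃ : M3 K) :
    M3 K ⊗[K] (M3 K ⊗[K] M3 K) →ₗ[K] M3 K ⊗[K] (M3 K ⊗[K] M3 K) :=
  TensorProduct.map (conjMap (G₁⁻¹)ᵀ G₂ᵀ)
    (TensorProduct.map (conjMap (G₂⁻¹)ᵀ G₃ᵀ) (conjMap (G₃⁻¹)ᵀ G₁ᵀ))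

/-- The 3×3 permutation matrix of the transposition (1 2). -/
def P12 (K : Type*) [Field K] : M3 K := !![0,1,0; 1,0,0; 0,0,1]

/-- The Klein four-group `𝒦 = {(I,I,I),(I,P,P),(P,P,I),(P,I,P)}`. -/
def kleinK (K : Type*) [Field K] : List (M3 K × M3 K × M3 K) :=
  [(1, 1, 1), (1, P12 K, P12 K), (P12 K, P12 K, 1), (P12 K, 1, P12 K)]

/-- Sum over the Klein four-group of the sandwiched images of a tensor. -/
noncomputable def orbitSum (x : M3 K ⊗[K] (M3 K ⊗[K] M3 K)) :
    M3 K ⊗[K] (M3 K ⊗[K] M3 K) :=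
  ((kleinK K).map fun g => sandwich g.1 g.2.1 g.2.2 x).sum

/-- Embedding of a 2×2 matrix into rows/columns {2,3} of a 3×3 matrix
(zeros in row 1 and column 1): the lift `L₁,₁,₁`. -/
def iota (M : Matrix (Fin 2) (Fin 2) K) : M3 K :=
  Matrix.of fun i j =>
    Fin.cases (0 : K) (fun i' => Fin.cases (0 : K) (fun j' => M i' j') j) i

/-- The Winograd variant `W` (λ = 1), embedded into 3×3 matrices via `ι`. -/
noncomputable def iotaW (K : Type*) [Field K] : M3 K ⊗[K] (M3 K ⊗[K] M3 K) :=
  iota !![-1,1;-1,0] ⊗ₜ[K] (iota !![1,-1;1,0] ⊗ₜ[K] iota !![1,-1;1,0])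
  + iota !![-1,1;-1,1] ⊗ₜ[K] (iota !![0,0;1,0] ⊗ₜ[K] iota !![0,1;0,0])
  + iota !![1,0;1,0] ⊗ₜ[K] (iota !![1,0;1,0] ⊗ₜ[K] iota !![1,0;1,0])
  + iota !![0,0;0,1] ⊗ₜ[K] (iota !![0,0;0,1] ⊗ₜ[K] iota !![0,0;0,1])
  + iota !![0,0;1,0] ⊗ₜ[K] (iota !![0,1;0,0] ⊗ₜ[K] iota !![-1,1;-1,1])
  + iota !![1,-1;0,0] ⊗ₜ[K] (iota !![1,-1;0,0] ⊗ₜ[K] iota !![1,-1;0,0])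
  + iota !![0,1;0,0] ⊗ₜ[K] (iota !![-1,1;-1,1] ⊗ₜ[K] iota !![0,0;1,0])

/-- Rank-one tensor of matrix units (0-based indices). -/
noncomputable def eT (i j p q k r : Fin 3) : M3 K ⊗[K] (M3 K ⊗[K] M3 K) :=
  Matrix.single i j (1 : K) ⊗ₜ[K]
    (Matrix.single p q (1 : K) ⊗ₜ[K] Matrix.single k r (1 : K))


section Aux
variable {K : Type*} [Field K]

lemma conjMap_apply (P Q X : M3 K) : conjMap P Q X = P * X * Q := rfl

lemma P12_inv : (P12 K)⁻¹ = P12 K := by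
  apply Matrix.inv_eq_left_inv
  ext a b; fin_cases a <;> fin_cases b <;>
    simp [P12, Matrix.mul_apply, Fin.sum_univ_three, Matrix.one_apply, Matrix.vecHead, Matrix.vecTail]

lemma P12_tr : (P12 K)ᵀ = P12 K := by
  ext a b; fin_cases a <;> fin_cases b <;> rfl

lemma P12_mul (M : M3 K) : P12 K * M = !![M 1 0, M 1 1, M 1 2; M 0 0, M 0 1, M 0 2; M 2 0, M 2 1, M 2 2] := by
  ext a b; fin_cases a <;> fin_cases b <;>
    simp [P12, Matrix.mul_apply, Fin.sum_univ_three, Matrix.vecHead, Matrix.vecTail]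

lemma mul_P12 (M : M3 K) : M * P12 K = !![M 0 1, M 0 0, M 0 2; M 1 1, M 1 0, M 1 2; M 2 1, M 2 0, M 2 2] := by
  ext a b; fin_cases a <;> fin_cases b <;>
    simp [P12, Matrix.mul_apply, Fin.sum_univ_three, Matrix.vecHead, Matrix.vecTail]

lemma iota_lit (a b c d : K) : iota !![a,b;c,d] = !![0,0,0;0,a,b;0,c,d] := by
  ext i j; fin_cases i <;> fin_cases j <;> rfl

lemma std00 : Matrix.single (0:Fin 3) (0:Fin 3) (1:K) = !![1, 0, 0; 0, 0, 0; 0, 0, 0] := by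
  ext a b; fin_cases a <;> fin_cases b <;> simp [Matrix.single, Matrix.vecHead, Matrix.vecTail]
lemma std01 : Matrix.single (0:Fin 3) (1:Fin 3) (1:K) = !![0, 1, 0; 0, 0, 0; 0, 0, 0] := by
  ext a b; fin_cases a <;> fin_cases b <;> simp [Matrix.single, Matrix.vecHead, Matrix.vecTail]
lemma std02 : Matrix.single (0:Fin 3) (2:Fin 3) (1:K) = !![0, 0, 1; 0, 0, 0; 0, 0, 0] := by
  ext a b; fin_cases a <;> fin_cases b <;> simp [Matrix.single, Matrix.vecHead, Matrix.vecTail]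
lemma std10 : Matrix.single (1:Fin 3) (0:Fin 3) (1:K) = !![0, 0, 0; 1, 0, 0; 0, 0, 0] := by
  ext a b; fin_cases a <;> fin_cases b <;> simp [Matrix.single, Matrix.vecHead, Matrix.vecTail]
lemma std11 : Matrix.single (1:Fin 3) (1:Fin 3) (1:K) = !![0, 0, 0; 0, 1, 0; 0, 0, 0] := by
  ext a b; fin_cases a <;> fin_cases b <;> simp [Matrix.single, Matrix.vecHead, Matrix.vecTail]
lemma std12 : Matrix.single (1:Fin 3) (2:Fin 3) (1:K) = !![0, 0, 0; 0, 0, 1; 0, 0, 0] := by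
  ext a b; fin_cases a <;> fin_cases b <;> simp [Matrix.single, Matrix.vecHead, Matrix.vecTail]
lemma std20 : Matrix.single (2:Fin 3) (0:Fin 3) (1:K) = !![0, 0, 0; 0, 0, 0; 1, 0, 0] := by
  ext a b; fin_cases a <;> fin_cases b <;> simp [Matrix.single, Matrix.vecHead, Matrix.vecTail]
lemma std21 : Matrix.single (2:Fin 3) (1:Fin 3) (1:K) = !![0, 0, 0; 0, 0, 0; 0, 1, 0] := by
  ext a b; fin_cases a <;> fin_cases b <;> simp [Matrix.single, Matrix.vecHead, Matrix.vecTail]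
lemma std22 : Matrix.single (2:Fin 3) (2:Fin 3) (1:K) = !![0, 0, 0; 0, 0, 0; 0, 0, 1] := by
  ext a b; fin_cases a <;> fin_cases b <;> simp [Matrix.single, Matrix.vecHead, Matrix.vecTail]

lemma mergeX1 : (!![(-1), 0, 1; 0, (-1), 1; (-1), (-1), 1] : M3 K) = !![0, 0, 0; 0, (-1), 1; 0, (-1), 1] + !![(-1), 0, 1; 0, 0, 0; (-1), 0, 1] - !![0, 0, 0; 0, 0, 0; 0, 0, 1] := by
  ext a b; fin_cases a <;> fin_cases b <;> norm_num
lemma mergeX2 : (!![0, (-1), 1; (-1), 0, 1; (-1), (-1), 1] : M3 K) = !![0, 0, 0; (-1), 0, 1; (-1), 0, 1] + !![0, (-1), 1; 0, 0, 0; 0, (-1), 1] - !![0, 0, 0; 0, 0, 0; 0, 0, 1] := by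
  ext a b; fin_cases a <;> fin_cases b <;> norm_num

end Aux


set_option maxHeartbeats 4000000 in
set_option synthInstance.maxHeartbeats 400000 in
/-- The tensor `T = ∑_{g∈K} g·(e₁₁⊗e₁₁⊗e₁₁) + ∑_{g∈K} g·ι(W) − R` (which computes
3×3 matrix multiplication) is a sum of 23 rank-one tensors, i.e. has tensor rank
at most 23. Here `R = (1/2)∑_g g·(e₂₃⊗e₃₃⊗e₃₂) + (1/2)∑_g g·(e₃₃⊗e₃₂⊗e₂₃)
+ (1/2)∑_g g·(e₃₂⊗e₂₃⊗e₃₃) + 3·(orbit of e₃₃⊗e₃₃⊗e₃₃)` (the latter equals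
`(1/4)∑_g g·(e₃₃⊗e₃₃⊗e₃₃)` since `e₃₃⊗e₃₃⊗e₃₃` is a fixed point of `K`). -/

theorem laderman_variant_rank_23 [CharZero K] :
    ∃ f g h : Fin 23 → M3 K,
      orbitSum (eT 0 0 0 0 0 0) + orbitSum (iotaW K)
        - ((1/2 : K) • orbitSum (eT 1 2 2 2 2 1)
            + (1/2 : K) • orbitSum (eT 2 2 2 1 1 2)
            + (1/2 : K) • orbitSum (eT 2 1 1 2 2 2)
            + (3 : K) • ((1/4 : K) • orbitSum (eT 2 2 2 2 2 2)))
      = ∑ s, f s ⊗ₜ[K] (g s ⊗ₜ[K] h s) := by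
  refine ⟨![!![1, 0, 0; 0, 0, 0; 0, 0, 0], !![0, 1, 0; 0, 0, 0; 0, 0, 0], !![0, 0, 0; 0, 1, 0; 0, 0, 0], !![0, 0, 0; 1, 0, 0; 0, 0, 0], !![(-1), 0, 1; 0, (-1), 1; (-1), (-1), 1], !![0, 0, 0; 0, 0, 0; 0, 1, 0], !![0, 0, 0; 0, 0, 1; 0, 0, 0], !![0, (-1), 1; (-1), 0, 1; (-1), (-1), 1], !![0, 0, 0; 0, 0, 0; 1, 0, 0], !![0, 0, 1; 0, 0, 0; 0, 0, 0], !![0, 0, 0; 0, (-1), 1; 0, (-1), 0], !![0, 0, 0; (-1), 0, 1; (-1), 0, 0], !![(-1), 0, 1; 0, 0, 0; (-1), 0, 0], !![0, (-1), 1; 0, 0, 0; 0, (-1), 0], !![0, 0, 0; 0, 1, 0; 0, 1, 0], !![0, 0, 0; 1, 0, 0; 1, 0, 0], !![1, 0, 0; 0, 0, 0; 1, 0, 0], !![0, 1, 0; 0, 0, 0; 0, 1, 0], !![0, 0, 0; 0, 1, (-1); 0, 0, 0], !![0, 0, 0; 1, 0, (-1); 0, 0, 0], !![1, 0, (-1);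 0, 0, 0; 0, 0, 0], !![0, 1, (-1); 0, 0, 0; 0, 0, 0], !![0, 0, 0; 0, 0, 0; 0, 0, 1]], ![!![1, 0, 0; 0, 0, 0; 0, 0, 0], !![0, 0, 0; 0, 1, 0; 0, 0, 0], !![0, 0, 0; 1, 0, 0; 0, 0, 0], !![0, 1, 0; 0, 0, 0; 0, 0, 0], !![0, 0, 0; 0, 0, 0; 0, 1, 0], !![0, 0, 0; 0, 0, 1; 0, 0, 0], !![(-1), 0, 1; 0, (-1), 1; (-1), (-1), 1], !![0, 0, 0; 0, 0, 0; 1, 0, 0], !![0, 0, 1; 0, 0, 0; 0, 0, 0], !![0, (-1), 1; (-1), 0, 1; (-1), (-1), 1], !![0, 0, 0; 0, 1, (-1); 0, 1, 0], !![1, 0, (-1); 0, 0, 0; 1, 0, 0], !![0, 1, (-1); 0, 0, 0; 0, 1, 0], !![0, 0, 0; 1, 0, (-1); 1, 0, 0], !![0, 0, 0; 0, 1, 0; 0, 1, 0], !![1, 0, 0; 0, 0, 0; 1, 0, 0], !![0, 1, 0; 0, 0, 0; 0, 1, 0], !![0, 0, 0; 1, 0, 0; 1, 0, 0], !![0, 0,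 0; 0, 1, (-1); 0, 0, 0], !![1, 0, (-1); 0, 0, 0; 0, 0, 0], !![0, 1, (-1); 0, 0, 0; 0, 0, 0], !![0, 0, 0; 1, 0, (-1); 0, 0, 0], !![0, 0, 0; 0, 0, 0; 0, 0, 1]], ![!![1, 0, 0; 0, 0, 0; 0, 0, 0], !![0, 0, 0; 1, 0, 0; 0, 0, 0], !![0, 1, 0; 0, 0, 0; 0, 0, 0], !![0, 0, 0; 0, 1, 0; 0, 0, 0], !![0, 0, 0; 0, 0, 1; 0, 0, 0], !![(-1), 0, 1; 0, (-1), 1; (-1), (-1), 1], !![0, 0, 0; 0, 0, 0; 0, 1, 0], !![0, 0, 1; 0, 0, 0; 0, 0, 0], !![0, (-1), 1; (-1), 0, 1; (-1), (-1), 1], !![0, 0, 0; 0, 0, 0; 1, 0, 0], !![0, 0, 0; 0, 1, (-1); 0, 1, 0], !![0, 1, (-1); 0, 0, 0; 0, 1, 0], !![0, 0, 0; 1, 0, (-1); 1, 0, 0], !![1, 0, (-1); 0, 0, 0; 1, 0, 0], !![0, 0, 0; 0, 1, 0; 0, 1, 0], !![0, 1, 0; 0, 0, 0; 0, 1, 0],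 !![0, 0, 0; 1, 0, 0; 1, 0, 0], !![1, 0, 0; 0, 0, 0; 1, 0, 0], !![0, 0, 0; 0, 1, (-1); 0, 0, 0], !![0, 1, (-1); 0, 0, 0; 0, 0, 0], !![0, 0, 0; 1, 0, (-1); 0, 0, 0], !![1, 0, (-1); 0, 0, 0; 0, 0, 0], !![0, 0, 0; 0, 0, 0; 0, 0, 1]], ?_⟩
  simp only [orbitSum, kleinK, List.map_cons, List.map_nil, List.sum_cons, List.sum_nil,
    add_zero, sandwich, eT, iotaW, map_add, TensorProduct.map_tmul, conjMap_apply,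
    inv_one, Matrix.transpose_one, P12_inv, P12_tr, Matrix.one_mul, Matrix.mul_one,
    std00, std01, std02, std10, std11, std12, std20, std21, std22, iota_lit,
    P12_mul, mul_P12,
    Matrix.cons_val', Matrix.cons_val_zero, Matrix.cons_val_one, Matrix.head_cons,
    Matrix.head_fin_const, Matrix.empty_val', Matrix.cons_val_fin_one, Matrix.of_apply,
    Matrix.cons_val_two, Matrix.vecHead, Matrix.vecTail, Function.comp_apply,
    Fin.sum_univ_succ, Fin.sum_univ_zero, Matrix.cons_val_succ]
  simp only [mergeX1, mergeX2, TensorProduct.add_tmul, TensorProduct.sub_tmul,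
    TensorProduct.tmul_add, TensorProduct.tmul_sub]
  module
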